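/- arXiv:2008.03025 — 7 statements merged into one kernel-verified Lean document; each statement's English description precedes it below -/
import Mathlib

section
/- Let n be a positive integer, S a finite set, ξ : S → ℤ_{>0} a function, and (x_s)_{s∈S} a family of elements in a commutative ring. For each divisor d of n define B_d = ∏_{s ∈ S, (n/d) ∣ ξ(s)} (1 + x_s) and A_d = ∑_{k ∣ d} μ(k) · B_{d/k}, where μ is the Möbius function. Then A_d = ∑_{T ⊆ S, gcd(n, ξ(T)) = n/d} ∏_{t ∈ T} x_t, where ξ(T) = gcd{ξ(t) : t ∈ T} and ξ(∅) = 0 (so gcd(n, ξ(∅)) = n). -/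
/-!
Expanding the product, `B_e` is the sum of `∏_{t ∈ T} x_t` over the `T ⊆ S` with
`n/e ∣ ξ(T)`, i.e. with `gcd(n, ξ(T)) = n/i` for some `i ∣ e`. Hence `B_e = ∑_{i ∣ e} A_i` for
every `e ∣ n`, and Möbius inversion on the divisor-closed set of divisors of `n` recovers `A_d`.
-/

open Finset

theorem Finset.prod_one_add_filter {ι R : Type*} [CommSemiring R] (S : Finset ι) (p : ι → Prop)
    [DecidablePred p] (x : ι → R) :
    ∏ s ∈ S.filter p, (1 + x s) = ∑ T ∈ S.powerset.filter (fun T => ∀ t ∈ T, p t), ∏ t ∈ T, x t := by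
  rw [prod_one_add]
  congr 1
  ext T
  simp only [mem_powerset, mem_filter, subset_iff]
  exact forall₂_and

namespace Nat

theorem eq_div_iff_div_eq {n a b : ℕ} (hn : n ≠ 0) (ha : a ∣ n) (hb : b ∣ n) :
    a = n / b ↔ n / a = b := by
  rw [← div_eq_iff_eq_of_dvd_dvd hn ha (div_dvd_of_dvd hb), Nat.div_div_self hb hn]

theorem div_dvd_iff_div_dvd {n a b : ℕ} (hn : n ≠ 0) (ha : a ∣ n) (hb : b ∣ n) :
    n / a ∣ b ↔ n / b ∣ a := by
  rw [div_dvd_iff_dvd_mul ha (pos_of_dvd_of_pos ha (pos_of_ne_zero hn)),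
    div_dvd_iff_dvd_mul hb (pos_of_dvd_of_pos hb (pos_of_ne_zero hn)), mul_comm]

end Nat

theorem sum_divisors_sum_filter_gcd_eq_prod_one_add {ι R : Type*} [CommSemiring R] {n e : ℕ}
    (hn : n ≠ 0) (he : e ∣ n) (S : Finset ι) (ξ : ι → ℕ) (x : ι → R) :
    ∑ i ∈ e.divisors, ∑ T ∈ S.powerset.filter (fun T => n.gcd (T.gcd ξ) = n / i), ∏ t ∈ T, x t =
      ∏ s ∈ S.filter (fun s => n / e ∣ ξ s), (1 + x s) := by
  rw [prod_one_add_filter]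
  simp_rw [sum_filter]
  rw [sum_comm]
  refine sum_congr rfl fun T _ => ?_
  have hg : n.gcd (T.gcd ξ) ∣ n := Nat.gcd_dvd_left _ _
  have he₀ : e ≠ 0 := ne_zero_of_dvd_ne_zero hn he
  calc ∑ i ∈ e.divisors, (if n.gcd (T.gcd ξ) = n / i then ∏ t ∈ T, x t else 0)
      = ∑ i ∈ e.divisors, (if n / n.gcd (T.gcd ξ) = i then ∏ t ∈ T, x t else 0) := by
        refine sum_congr rfl fun i hi => ?_
        simp only [Nat.eq_div_iff_div_eq hn hg ((Nat.dvd_of_mem_divisors hi).trans he)]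
    _ = if ∀ t ∈ T, n / e ∣ ξ t then ∏ t ∈ T, x t else 0 := by
        refine (sum_ite_eq _ _ _).trans (if_congr ?_ rfl rfl)
        rw [Nat.mem_divisors, ← Nat.div_dvd_iff_div_dvd hn he hg, Nat.dvd_gcd_iff,
          Finset.dvd_gcd_iff]
        simp [he₀, Nat.div_dvd_of_dvd he]

theorem stmt1_general {ι : Type*} {R : Type*} [CommRing R]
    (n : ℕ) (hn : 0 < n) (S : Finset ι) (ξ : ι → ℕ)
    (x : ι → R) (d : ℕ) (hd : d ∣ n)
    (B : ℕ → R) (hB : ∀ e, B e = ∏ s ∈ S.filter (fun s => (n / e) ∣ ξ s), (1 + x s)) :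
    ∑ k ∈ d.divisors, (ArithmeticFunction.moebius k : ℤ) • B (d / k) =
      ∑ T ∈ S.powerset.filter (fun T => Nat.gcd n (T.gcd ξ) = n / d), ∏ t ∈ T, x t := by
  have hdiv : ∀ e > 0, e ∈ {e | e ∣ n} → ∑ i ∈ e.divisors,
      ∑ T ∈ S.powerset.filter (fun T => n.gcd (T.gcd ξ) = n / i), ∏ t ∈ T, x t = B e :=
    fun e _ he => by rw [hB, sum_divisors_sum_filter_gcd_eq_prod_one_add hn.ne' he]
  rw [← Nat.sum_divisorsAntidiagonal (fun k j => (ArithmeticFunction.moebius k : ℤ) • B j)]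
  exact (ArithmeticFunction.sum_eq_iff_sum_smul_moebius_eq_on _ (fun _ _ h₁ h₂ => h₁.trans h₂)).mp
    hdiv d (Nat.pos_of_dvd_of_pos hd hn) hd

/-- subset-sum identity for `A_d`: with
`B_e = ∏_{s ∈ S, (n/e) ∣ ξ(s)} (1 + x_s)` and `A_d = ∑_{k ∣ d} μ(k) B_{d/k}`,
one has `A_d = ∑_{T ⊆ S, gcd(n, ξ(T)) = n/d} ∏_{t ∈ T} x_t`. -/
theorem stmt1 {ι : Type*} [DecidableEq ι] {R : Type*} [CommRing R]
    (n : ℕ) (hn : 0 < n) (S : Finset ι) (ξ : ι → ℕ) (hξ : ∀ s ∈ S, 0 < ξ s)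
    (x : ι → R) (d : ℕ) (hd : d ∣ n)
    (B : ℕ → R) (hB : ∀ e, B e = ∏ s ∈ S.filter (fun s => (n / e) ∣ ξ s), (1 + x s)) :
    ∑ k ∈ d.divisors, (ArithmeticFunction.moebius k : ℤ) • B (d / k) =
      ∑ T ∈ S.powerset.filter (fun T => Nat.gcd n (T.gcd ξ) = n / d), ∏ t ∈ T, x t :=
  stmt1_general n hn S ξ x d hd B hB
end

section
/- Let n be a positive integer, S a finite set, and ξ : S → ℤ_{>0}. For each s ∈ S let x_s be a nonnegative rational number. Define B_d = ∏_{s ∈ S, (n/d) ∣ ξ(s)} (1 + x_s) for each divisor d of n, and A_d = ∑_{k ∣ d} μ(k) B_{d/k}. Then A_d ≥ 0 for every divisor d of n. -/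
/-!
Expanding each product `B_e = ∏ (1 + x_s)` over subsets `T ⊆ S` and exchanging the sums gives
`A_d = ∑_T (∏_{s ∈ T} x_s) · ∑_{k ∣ d, k·(n/d) ∣ gcd ξ(T)} μ(k)`, because `n / (d / k) = k · (n / d)`.
The inner Möbius sum is either empty or, writing `gcd ξ(T) = (n/d)·r`, the sum of `μ` over the
divisors of `gcd(d, r)`, which is `1` or `0`. So every term is nonnegative.
-/

open Finset

theorem Finset.prod_filter_one_add {ι R : Type*} [CommSemiring R] (s : Finset ι) (p : ι → Prop)
    [DecidablePred p] (f : ι → R) :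
    ∏ i ∈ s with p i, (1 + f i) = ∑ t ∈ s.powerset, if ∀ i ∈ t, p i then ∏ i ∈ t, f i else 0 := by
  rw [prod_one_add, ← sum_filter]
  congr 1
  ext t
  simp only [mem_powerset, mem_filter, subset_iff]
  grind

theorem Nat.div_div_eq_mul_div_of_dvd {n d k : ℕ} (hk : k ∣ d) (hd : d ∣ n) :
    n / (d / k) = k * (n / d) := by
  rcases eq_or_ne d 0 with rfl | hd0
  · simp
  refine Nat.div_eq_of_eq_mul_left (Nat.div_pos (Nat.le_of_dvd (by omega) hk)
    (Nat.pos_of_dvd_of_pos hk (by omega))) ?_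
  rw [mul_comm k, mul_assoc, Nat.mul_div_cancel' hk, Nat.div_mul_cancel hd]

namespace ArithmeticFunction

open scoped ArithmeticFunction.Moebius

theorem sum_divisors_moebius (n : ℕ) :
    ∑ k ∈ n.divisors, (μ k : ℤ) = if n = 1 then 1 else 0 := by
  rw [← coe_mul_zeta_apply, moebius_mul_coe_zeta, one_apply]

theorem sum_divisors_moebius_nonneg (n : ℕ) : 0 ≤ ∑ k ∈ n.divisors, (μ k : ℤ) := by
  rw [sum_divisors_moebius]
  split_ifs <;> norm_num

theorem sum_divisors_filter_dvd_moebius_nonneg (d r : ℕ) :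
    0 ≤ ∑ k ∈ d.divisors with k ∣ r, (μ k : ℤ) := by
  rcases eq_or_ne d 0 with rfl | hd
  · simp
  have hfilter : {k ∈ d.divisors | k ∣ r} = (d.gcd r).divisors := by
    rw [← Nat.divisors_filter_dvd_of_dvd hd (Nat.gcd_dvd_left d r)]
    exact filter_congr fun k hk => by simp [Nat.dvd_gcd_iff, Nat.dvd_of_mem_divisors hk]
  rw [hfilter]
  exact sum_divisors_moebius_nonneg _

theorem sum_divisors_filter_mul_dvd_moebius_nonneg (d m c : ℕ) :
    0 ≤ ∑ k ∈ d.divisors with k * m ∣ c, (μ k : ℤ) := by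
  by_cases hmc : m ∣ c
  · obtain ⟨r, rfl⟩ := hmc
    rcases eq_or_ne m 0 with rfl | hm
    · simpa using sum_divisors_moebius_nonneg d
    · simpa only [mul_comm _ m, Nat.mul_dvd_mul_iff_left (Nat.pos_of_ne_zero hm)]
        using sum_divisors_filter_dvd_moebius_nonneg d r
  · rw [filter_false_of_mem fun k _ h => hmc (Dvd.intro_left k rfl |>.trans h), sum_empty]

end ArithmeticFunction

theorem stmt2_general {ι : Type*}
    (n : ℕ) (S : Finset ι) (ξ : ι → ℕ)
    (x : ι → ℚ) (hx : ∀ s ∈ S, 0 ≤ x s) (d : ℕ) (hd : d ∣ n)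
    (B : ℕ → ℚ) (hB : ∀ e, B e = ∏ s ∈ S.filter (fun s => (n / e) ∣ ξ s), (1 + x s)) :
    0 ≤ ∑ k ∈ d.divisors, (ArithmeticFunction.moebius k : ℤ) • B (d / k) := by
  have hB_expand (k : ℕ) (hk : k ∈ d.divisors) : B (d / k) =
      ∑ T ∈ S.powerset, if k * (n / d) ∣ T.gcd ξ then ∏ s ∈ T, x s else 0 := by
    simp_rw [hB, Nat.div_div_eq_mul_div_of_dvd (Nat.dvd_of_mem_divisors hk) hd,
      prod_filter_one_add, Finset.dvd_gcd_iff]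
  rw [sum_congr rfl fun k hk => by rw [hB_expand k hk]]
  simp_rw [smul_sum]
  rw [sum_comm]
  refine sum_nonneg fun T hT => ?_
  simp_rw [smul_ite, smul_zero, ← sum_filter, ← sum_smul]
  exact smul_nonneg
    (ArithmeticFunction.sum_divisors_filter_mul_dvd_moebius_nonneg d (n / d) _)
    (prod_nonneg fun s hs => hx s (mem_powerset.mp hT hs))

/-- nonnegativity of `A_d = ∑_{k ∣ d} μ(k) B_{d/k}` when the `x_s` are
nonnegative rationals, where `B_e = ∏_{s ∈ S, (n/e) ∣ ξ(s)} (1 + x_s)`. -/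
theorem stmt2 {ι : Type*} [DecidableEq ι]
    (n : ℕ) (hn : 0 < n) (S : Finset ι) (ξ : ι → ℕ) (hξ : ∀ s ∈ S, 0 < ξ s)
    (x : ι → ℚ) (hx : ∀ s ∈ S, 0 ≤ x s) (d : ℕ) (hd : d ∣ n)
    (B : ℕ → ℚ) (hB : ∀ e, B e = ∏ s ∈ S.filter (fun s => (n / e) ∣ ξ s), (1 + x s)) :
    0 ≤ ∑ k ∈ d.divisors, (ArithmeticFunction.moebius k : ℤ) • B (d / k) :=
  stmt2_general n S ξ x hx d hd B hB
end

section
/- Let n be a positive integer and for each divisor e of n let a_e be an integer. Define B(q) = ∑_{e ∣ n} a_e · (q^n - 1)/(q^{n/e} - 1) ∈ ℤ[q] (where (q^n-1)/(q^{n/e}-1) = 1 + q^{n/e} + q^{2n/e} + ... + q^{n - n/e}). Then for any divisor d of n, B(q) ≡ ∑_{e ∣ (n/d)} e · a_e (mod Φ_d(q)), where Φ_d is the d-th cyclotomic polynomial. -/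
/-!
Write `s = n / e`. If `d ∣ s` then `Φ_d ∣ X ^ (j * s) - 1` for every `j`, so the geometric sum
`∑_{j < e} X ^ (j * s)` is `≡ e` modulo `Φ_d`. Otherwise, since `X ^ n - 1 = ∏_{k ∣ n} Φ_k` and
`X ^ s - 1 = ∏_{k ∣ s} Φ_k`, the geometric sum is the product of the `Φ_k` with `k ∣ n`, `k ∤ s`,
one of which is `Φ_d`. Finally, the divisors `e` of `n` with `d ∣ n / e` are exactly the divisors
of `n / d`.
-/

open Polynomial Finset

namespace Polynomial

variable {R : Type*} [CommRing R]

theorem cyclotomic_dvd_X_pow_sub_one_of_dvd {d m : ℕ} (h : d ∣ m) :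
    cyclotomic d R ∣ X ^ m - 1 := by
  obtain ⟨k, rfl⟩ := h
  refine (cyclotomic.dvd_X_pow_sub_one d R).trans ?_
  simpa [pow_mul] using sub_dvd_pow_sub_pow ((X : R[X]) ^ d) 1 k

theorem geom_sum_X_pow_mul_eq_prod_cyclotomic {e s : ℕ} (he : 0 < e) (hs : 0 < s) :
    ∑ j ∈ range e, (X : R[X]) ^ (j * s) = ∏ k ∈ (e * s).divisors with ¬ k ∣ s, cyclotomic k R := by
  refine (monic_X_pow_sub_C (1 : R) hs.ne').isRegular.left ?_
  have hdiv : (e * s).divisors.filter (· ∣ s) = s.divisors := by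
    ext k
    simp only [mem_filter, Nat.mem_divisors]
    exact ⟨fun h => ⟨h.2, hs.ne'⟩, fun h => ⟨⟨h.1.mul_left e, by positivity⟩, h.1⟩⟩
  calc (X ^ s - C 1) * ∑ j ∈ range e, (X : R[X]) ^ (j * s)
      = X ^ (e * s) - 1 := by simpa [← pow_mul, mul_comm] using geom_sum_mul ((X : R[X]) ^ s) e
    _ = (∏ k ∈ (e * s).divisors with k ∣ s, cyclotomic k R) *
          ∏ k ∈ (e * s).divisors with ¬ k ∣ s, cyclotomic k R := by
      rw [prod_filter_mul_prod_filter_not, prod_cyclotomic_eq_X_pow_sub_one (by positivity)]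
    _ = (X ^ s - C 1) * ∏ k ∈ (e * s).divisors with ¬ k ∣ s, cyclotomic k R := by
      rw [hdiv, prod_cyclotomic_eq_X_pow_sub_one hs, C_1]

theorem cyclotomic_dvd_geom_sum_X_pow_sub {d e s : ℕ} (hd : d ∣ e * s) (he : 0 < e) (hs : 0 < s) :
    cyclotomic d R ∣
      ∑ j ∈ range e, (X : R[X]) ^ (j * s) - C (if d ∣ s then (e : R) else 0) := by
  split_ifs with hds
  · have hconst : C (e : R) = ∑ _j ∈ range e, (1 : R[X]) := by simp
    rw [hconst, ← sum_sub_distrib]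
    exact dvd_sum fun j _ => cyclotomic_dvd_X_pow_sub_one_of_dvd (hds.mul_left j)
  · rw [C_0, sub_zero, geom_sum_X_pow_mul_eq_prod_cyclotomic he hs]
    exact dvd_prod_of_mem _ (mem_filter.mpr ⟨Nat.mem_divisors.mpr ⟨hd, by positivity⟩, hds⟩)

end Polynomial

theorem Nat.divisors_div_eq_filter {n d : ℕ} (hd : d ∣ n) :
    (n / d).divisors = n.divisors.filter (d ∣ n / ·) := by
  rcases eq_or_ne n 0 with rfl | hn
  · simp
  have hdn : n / d ≠ 0 := (Nat.div_ne_zero_iff_of_dvd hd).mpr ⟨hn, ne_zero_of_dvd_ne_zero hn hd⟩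
  ext e
  simp only [mem_filter, Nat.mem_divisors, Nat.dvd_div_iff_mul_dvd hd, ne_eq, hn, hdn,
    not_false_eq_true, and_true]
  constructor
  · intro h
    have hen : e ∣ n := (dvd_mul_left e d).trans h
    exact ⟨hen, (Nat.dvd_div_iff_mul_dvd hen).mpr (by rwa [mul_comm])⟩
  · rintro ⟨hen, hde⟩
    rwa [Nat.dvd_div_iff_mul_dvd hen, mul_comm] at hde

theorem stmt3_general (n : ℕ) (a : ℕ → ℤ) (d : ℕ) (hd : d ∣ n) :
    (cyclotomic d ℤ) ∣
      (∑ e ∈ n.divisors, Polynomial.C (a e) * ∑ j ∈ Finset.range e, (X : ℤ[X]) ^ (j * (n / e))) -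
        Polynomial.C (∑ e ∈ (n / d).divisors, (e : ℤ) * a e) := by
  have hsum : ∑ e ∈ (n / d).divisors, (e : ℤ) * a e =
      ∑ e ∈ n.divisors, a e * if d ∣ n / e then (e : ℤ) else 0 := by
    rw [Nat.divisors_div_eq_filter hd, sum_filter]
    exact sum_congr rfl fun e _ => by split_ifs <;> ring
  rw [hsum, map_sum, ← sum_sub_distrib]
  refine dvd_sum fun e he => ?_
  obtain ⟨hen, hn⟩ := Nat.mem_divisors.mp he
  have he0 : 0 < e := Nat.pos_of_mem_divisors he
  have hs0 : 0 < n / e := Nat.div_pos (Nat.le_of_dvd (Nat.pos_of_ne_zero hn) hen) he0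
  rw [map_mul, ← mul_sub]
  refine dvd_mul_of_dvd_right (cyclotomic_dvd_geom_sum_X_pow_sub ?_ he0 hs0) _
  rwa [Nat.mul_div_cancel' hen]

/-- for `B(q) = ∑_{e ∣ n} a_e (1 + q^{n/e} + ⋯ + q^{n - n/e})` and `d ∣ n`,
`B(q) ≡ ∑_{e ∣ (n/d)} e · a_e (mod Φ_d(q))` in `ℤ[q]`. -/
theorem stmt3 (n : ℕ) (hn : 0 < n) (a : ℕ → ℤ) (d : ℕ) (hd : d ∣ n) :
    (cyclotomic d ℤ) ∣
      (∑ e ∈ n.divisors, Polynomial.C (a e) * ∑ j ∈ Finset.range e, (X : ℤ[X]) ^ (j * (n / e))) -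
        Polynomial.C (∑ e ∈ (n / d).divisors, (e : ℤ) * a e) :=
  stmt3_general n a d hd
end

section
/- Let f(q) = ∑_{d ∣ n} a_d · (q^n - 1)/(q^{n/d} - 1) with nonnegative integers a_d, and let ω be a primitive n-th root of unity. Then for every divisor k of n, ∑_{j ∣ k} μ(k/j) · f(ω^j) = k · a_k. In particular this quantity is nonnegative. -/
/-!
At `q = ω ^ j` the block `(q ^ n - 1) / (q ^ (n / d) - 1)` is the geometric sum over the `d`-th
roots of unity in `ω ^ (j * (n / d))`, hence equals `d` if `d ∣ j` and `0` otherwise. Therefore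
`f (ω ^ j) = ∑_{d ∣ j} d a_d` for `j ∣ n`, and Möbius inversion recovers `k a_k`.
-/

open Polynomial Finset

theorem IsPrimitiveRoot.sum_range_pow_pow_eq_ite {R : Type*} [CommRing R] [IsDomain R]
    {ζ : R} {d : ℕ} (hζ : IsPrimitiveRoot ζ d) (j : ℕ) :
    ∑ i ∈ range d, (ζ ^ j) ^ i = if d ∣ j then (d : R) else 0 := by
  split_ifs with hdj
  · simp [(hζ.pow_eq_one_iff_dvd j).mpr hdj]
  · have hne : ζ ^ j ≠ 1 := fun h => hdj ((hζ.pow_eq_one_iff_dvd j).mp h)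
    refine eq_zero_of_ne_zero_of_mul_left_eq_zero (sub_ne_zero_of_ne hne.symm) ?_
    rw [mul_neg_geom_sum, ← pow_mul, mul_comm, pow_mul, hζ.pow_eq_one, one_pow, sub_self]

theorem IsPrimitiveRoot.eval_pow_sum_range_X_pow_mul_div {R : Type*} [CommRing R] [IsDomain R]
    {ω : R} {n d : ℕ} (hω : IsPrimitiveRoot ω n) (hn : n ≠ 0) (hd : d ∣ n) (j : ℕ) :
    (∑ i ∈ range d, X ^ (i * (n / d)) : R[X]).eval (ω ^ j) = if d ∣ j then (d : R) else 0 := by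
  have hroot : IsPrimitiveRoot (ω ^ (n / d)) d := by
    have hnd : n / d ≠ 0 := (Nat.div_ne_zero_iff_of_dvd hd).2 ⟨hn, ne_zero_of_dvd_ne_zero hn hd⟩
    simpa [Nat.div_div_self hd hn] using hω.pow_of_dvd hnd (Nat.div_dvd_of_dvd hd)
  rw [← hroot.sum_range_pow_pow_eq_ite j, eval_finsetSum]
  refine sum_congr rfl fun i _ => ?_
  rw [eval_X_pow, ← pow_mul, ← pow_mul, ← pow_mul]
  congr 1; ring

theorem IsPrimitiveRoot.eval_pow_sum_divisors_C_mul {R : Type*} [CommRing R] [IsDomain R]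
    {ω : R} {n : ℕ} (hω : IsPrimitiveRoot ω n) (hn : n ≠ 0) (a : ℕ → R) {j : ℕ} (hj : j ∣ n) :
    (∑ d ∈ n.divisors, C (a d) * ∑ i ∈ range d, X ^ (i * (n / d))).eval (ω ^ j)
      = ∑ d ∈ j.divisors, (d : R) * a d := by
  rw [eval_finsetSum, ← Nat.divisors_filter_dvd_of_dvd hn hj, sum_filter]
  refine sum_congr rfl fun d hd => ?_
  rw [eval_mul, eval_C, hω.eval_pow_sum_range_X_pow_mul_div hn (Nat.dvd_of_mem_divisors hd)]
  split_ifs <;> simp [mul_comm]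

theorem ArithmeticFunction.sum_divisors_moebius_mul_sum_divisors {R : Type*} [NonAssocRing R]
    (b : ℕ → R) {k : ℕ} (hk : 0 < k) :
    ∑ j ∈ k.divisors, (moebius (k / j) : R) * ∑ d ∈ j.divisors, b d = b k := by
  rw [← Nat.sum_divisorsAntidiagonal' fun x y => (moebius x : R) * ∑ d ∈ y.divisors, b d]
  exact sum_eq_iff_sum_mul_moebius_eq.mp (fun _ _ => rfl) k hk

/-- for `f(q) = ∑_{d ∣ n} a_d (1 + q^{n/d} + ⋯ + q^{n - n/d})` with `a_d ∈ ℕ`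
and `ω` a primitive `n`-th root of unity, for every divisor `k` of `n` one has
`∑_{j ∣ k} μ(k/j) f(ω^j) = k · a_k`; in particular it is nonnegative. -/
theorem stmt5 (n : ℕ) (hn : 0 < n) (a : ℕ → ℕ) (ω : ℂ) (hω : IsPrimitiveRoot ω n)
    (f : ℂ[X])
    (hf : f = ∑ d ∈ n.divisors, Polynomial.C (a d : ℂ) * ∑ j ∈ Finset.range d, X ^ (j * (n / d)))
    (k : ℕ) (hk : k ∣ n) :
    ∑ j ∈ k.divisors, (ArithmeticFunction.moebius (k / j) : ℂ) * f.eval (ω ^ j)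
      = (k : ℂ) * (a k : ℂ) ∧
    0 ≤ (∑ j ∈ k.divisors, (ArithmeticFunction.moebius (k / j) : ℂ) * f.eval (ω ^ j)).re := by
  have hsum : ∑ j ∈ k.divisors, (ArithmeticFunction.moebius (k / j) : ℂ) * f.eval (ω ^ j)
      = (k : ℂ) * (a k : ℂ) := by
    rw [sum_congr rfl fun j hj => by
      rw [hf, hω.eval_pow_sum_divisors_C_mul hn.ne' _ ((Nat.dvd_of_mem_divisors hj).trans hk)]]
    exact ArithmeticFunction.sum_divisors_moebius_mul_sum_divisors (fun d => (d : ℂ) * (a d : ℂ))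
      (Nat.pos_of_dvd_of_pos hk hn)
  refine ⟨hsum, ?_⟩
  rw [hsum, ← Nat.cast_mul, Complex.natCast_re]
  positivity
end

section
/- Let n be a positive integer and B(q) ∈ ℤ[q] a polynomial of degree < n of the form B(q) = ∑_{d ∣ n} a_d · (1 + q^{n/d} + q^{2n/d} + ... + q^{n - n/d}) with rational coefficients a_d. If B(q) has integer coefficients, then every a_d is an integer. -/
open Polynomial Finset

/-!
The coefficient of `B` at an index `i < n` is the sum of the `a_d` over the divisors `d` with
`n / d ∣ i`. At `i = n / e` this is `∑_{e ∣ d ∣ n} a_d`, so the sums of `a` over the multiples of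
each divisor are integers, and downward induction on `e` peels off `a_e` from its sum.
-/

theorem AddSubgroup.mem_of_sum_multiples_mem {M : Type*} [AddCommGroup M] (G : AddSubgroup M)
    (s : Finset ℕ) (hs : 0 ∉ s) (a : ℕ → M) (h : ∀ e ∈ s, ∑ d ∈ s with e ∣ d, a d ∈ G) :
    ∀ e ∈ s, a e ∈ G := by
  refine Nat.strong_decreasing_induction ?_ fun e ih he => ?_
  · exact ⟨s.sup id, fun m hm hms => absurd (le_sup (f := id) hms) (not_le.mpr hm)⟩
  have hsplit : ∑ d ∈ s with e ∣ d, a d = a e + ∑ d ∈ (s.filter (e ∣ ·)).erase e, a d :=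
    (add_sum_erase _ a (mem_filter.mpr ⟨he, dvd_rfl⟩)).symm
  have hrest : ∑ d ∈ (s.filter (e ∣ ·)).erase e, a d ∈ G := by
    refine G.sum_mem fun d hd => ?_
    obtain ⟨hde, hds, hed⟩ : d ≠ e ∧ d ∈ s ∧ e ∣ d := by simpa [and_assoc] using hd
    have hd0 : d ≠ 0 := fun h => hs (h ▸ hds)
    exact ih d ((Nat.le_of_dvd (Nat.pos_of_ne_zero hd0) hed).lt_of_ne' hde) hds
  simpa [hsplit] using G.sub_mem (h e he) hrest

theorem Nat.div_dvd_div_iff_dvd {n d e : ℕ} (hd : d ∈ n.divisors) (he : e ∈ n.divisors) :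
    n / d ∣ n / e ↔ e ∣ d := by
  calc n / d ∣ n / e ↔ n ∣ d * (n / e) :=
        Nat.div_dvd_iff_dvd_mul (Nat.dvd_of_mem_divisors hd) (Nat.pos_of_mem_divisors hd)
    _ ↔ e * (n / e) ∣ d * (n / e) := by rw [Nat.mul_div_cancel' (Nat.dvd_of_mem_divisors he)]
    _ ↔ e ∣ d := Nat.mul_dvd_mul_iff_right
        (Nat.div_pos (Nat.divisor_le he) (Nat.pos_of_mem_divisors he))

theorem Polynomial.coeff_sum_range_X_pow_mul {R : Type*} [Semiring R] {d m i : ℕ}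
    (hi : i < d * m) : (∑ j ∈ range d, (X : R[X]) ^ (j * m)).coeff i = if m ∣ i then 1 else 0 := by
  simp only [finsetSum_coeff, coeff_X_pow]
  split_ifs with hmi
  · obtain ⟨k, rfl⟩ := hmi
    have hm : 0 < m := Nat.pos_of_ne_zero (by rintro rfl; simp at hi)
    have hk : k < d := by nlinarith
    simp [mul_comm m, Nat.mul_left_inj hm.ne', hk]
  · exact sum_eq_zero fun j _ => if_neg fun h : i = j * m => hmi (h ▸ dvd_mul_left m j)

theorem Polynomial.coeff_sum_divisors_mul_sum_range_X_pow {R : Type*} [Semiring R] (a : ℕ → R)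
    {n i : ℕ} (hi : i < n) :
    (∑ d ∈ n.divisors, C (a d) * ∑ j ∈ range d, (X : R[X]) ^ (j * (n / d))).coeff i =
      ∑ d ∈ n.divisors with n / d ∣ i, a d := by
  rw [finsetSum_coeff, sum_filter]
  refine sum_congr rfl fun d hd => ?_
  have hi' : i < d * (n / d) := by rwa [Nat.mul_div_cancel' (Nat.dvd_of_mem_divisors hd)]
  rw [coeff_C_mul, coeff_sum_range_X_pow_mul hi', mul_ite, mul_one, mul_zero]

theorem stmt6_general (n : ℕ) (a : ℕ → ℚ)
    (B : ℚ[X])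
    (hB : B = ∑ d ∈ n.divisors, Polynomial.C (a d) * ∑ j ∈ Finset.range d, X ^ (j * (n / d)))
    (hint : ∀ i, ∃ z : ℤ, B.coeff i = (z : ℚ)) :
    ∀ d ∈ n.divisors, ∃ z : ℤ, a d = (z : ℚ) := by
  -- `n / e % n` is `n / e` except for `e = 1`, where it moves the index `n` down to `0`.
  have hupper : ∀ e ∈ n.divisors, B.coeff (n / e % n) = ∑ d ∈ n.divisors with e ∣ d, a d := by
    intro e he
    have hn := Nat.ne_zero_of_mem_divisors he
    rw [hB, coeff_sum_divisors_mul_sum_range_X_pow a (Nat.mod_lt _ (Nat.pos_of_ne_zero hn))]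
    refine sum_congr (filter_congr fun d hd => ?_) fun _ _ => rfl
    rw [Nat.dvd_mod_iff (Nat.div_dvd_of_dvd (Nat.dvd_of_mem_divisors hd)),
      Nat.div_dvd_div_iff_dvd hd he]
  have hsums : ∀ e ∈ n.divisors, ∑ d ∈ n.divisors with e ∣ d, a d ∈ (Int.castAddHom ℚ).range := by
    intro e he
    obtain ⟨z, hz⟩ := hint (n / e % n)
    exact ⟨z, by rw [← hupper e he, hz]; rfl⟩
  intro e he
  obtain ⟨z, hz⟩ := (Int.castAddHom ℚ).range.mem_of_sum_multiples_mem n.divisors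
    (fun h => lt_irrefl 0 (Nat.pos_of_mem_divisors h)) a hsums e he
  exact ⟨z, hz.symm⟩

/-- if `B(q) = ∑_{d ∣ n} a_d (1 + q^{n/d} + ⋯ + q^{n - n/d})` with rational
coefficients `a_d` has integer coefficients, then every `a_d` (for `d ∣ n`) is an integer. -/
theorem stmt6 (n : ℕ) (hn : 0 < n) (a : ℕ → ℚ)
    (B : ℚ[X])
    (hB : B = ∑ d ∈ n.divisors, Polynomial.C (a d) * ∑ j ∈ Finset.range d, X ^ (j * (n / d)))
    (hint : ∀ i, ∃ z : ℤ, B.coeff i = (z : ℚ)) :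
    ∀ d ∈ n.divisors, ∃ z : ℤ, a d = (z : ℚ) :=
  stmt6_general n a B hB hint
end

section
/- Let p be a prime with p ≥ m and let λ be a partition with at most m parts. Then the p-th cyclotomic polynomial Φ_p(q) divides s_λ(1, q, q², ..., q^{m-1}) in ℤ[q] if and only if there exist indices 1 ≤ i < j ≤ m with λ_i - i ≡ λ_j - j (mod p). -/
/-!
`Φ_p` is the minimal polynomial over `ℤ` of a primitive `p`-th root of unity `ζ`, so
`Φ_p ∣ S` iff `S(ζ) = 0`. Clearing denominators in the product formula and evaluating at `ζ`,
the denominator factors `1 - ζ^(j-i)` do not vanish because `0 < j - i < m ≤ p`; hence `S(ζ) = 0`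
iff some numerator factor `1 - ζ^((λ_i-i)-(λ_j-j))` vanishes, i.e. iff `p` divides that exponent.
-/

open Finset Polynomial

theorem Finset.mul_prod_eq_mul_prod_of_eq_mul_prod_div {ι K : Type*} [Field K] {s : Finset ι}
    {a b : ι → K} {f g : K} (hb : ∀ i ∈ s, b i ≠ 0) (h : f = g * ∏ i ∈ s, a i / b i) :
    f * ∏ i ∈ s, b i = g * ∏ i ∈ s, a i := by
  rw [h, mul_assoc, prod_div_distrib, div_mul_cancel₀ _ (prod_ne_zero_iff.mpr hb)]

theorem eq_zero_iff_exists_eq_zero_of_mul_eq_mul_prod {ι R : Type*} [CommRing R] [IsDomain R]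
    {s : Finset ι} {a : ι → R} {x c y : R} (hc : c ≠ 0) (hy : y ≠ 0)
    (h : x * c = y * ∏ i ∈ s, a i) : x = 0 ↔ ∃ i ∈ s, a i = 0 := by
  rw [← prod_eq_zero_iff, ← mul_eq_zero_iff_right hc, h, mul_eq_zero_iff_left hy]

theorem mul_prod_one_sub_X_pow_of_algebraMap_eq {ι R K : Type*} [CommRing R] [Field K]
    [Algebra R K] [FaithfulSMul R K] {s : Finset ι} {k : ℕ} {e d : ι → ℕ} {S : R[X]}
    (hd : ∀ i ∈ s, d i ≠ 0)
    (hS : algebraMap K[X] (RatFunc K) (S.map (algebraMap R K)) =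
      RatFunc.X ^ k * ∏ i ∈ s, (1 - RatFunc.X ^ e i) / (1 - RatFunc.X ^ d i)) :
    S * ∏ i ∈ s, (1 - X ^ d i) = X ^ k * ∏ i ∈ s, (1 - X ^ e i) := by
  apply map_injective _ (FaithfulSMul.algebraMap_injective R K)
  apply RatFunc.algebraMap_injective K
  simp only [Polynomial.map_mul, Polynomial.map_prod, Polynomial.map_sub, Polynomial.map_pow,
    Polynomial.map_one, map_X, map_mul, map_prod, map_sub, map_one, map_pow, RatFunc.algebraMap_X]
  refine mul_prod_eq_mul_prod_of_eq_mul_prod_div (fun i hi => ?_) hS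
  rw [← RatFunc.algebraMap_X, ← map_pow, ← map_one (algebraMap K[X] _), ← map_sub]
  refine (map_ne_zero_iff _ (RatFunc.algebraMap_injective K)).mpr ?_
  rw [← neg_ne_zero, neg_sub, ← C_1]
  exact X_pow_sub_C_ne_zero (Nat.pos_of_ne_zero (hd i hi)) 1

theorem IsPrimitiveRoot.one_sub_pow_eq_zero_iff {R : Type*} [CommRing R] {ζ : R} {p : ℕ}
    (hζ : IsPrimitiveRoot ζ p) (n : ℕ) : 1 - ζ ^ n = 0 ↔ p ∣ n := by
  rw [sub_eq_zero, eq_comm, hζ.pow_eq_one_iff_dvd]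

theorem Polynomial.cyclotomic_dvd_iff_aeval_eq_zero {K : Type*} [Field K] [CharZero K] {ζ : K}
    {p : ℕ} (hp : 0 < p) (hζ : IsPrimitiveRoot ζ p) (S : ℤ[X]) :
    cyclotomic p ℤ ∣ S ↔ aeval ζ S = 0 := by
  rw [cyclotomic_eq_minpoly hζ hp, minpoly.isIntegrallyClosed_dvd_iff (hζ.isIntegral hp)]

theorem exists_ascending_pair_dvd_iff_exists_modEq {p m : ℕ} {lam : ℕ → ℕ} (hlam : Antitone lam) :
    (∃ q ∈ (range m ×ˢ range m).filter (fun q : ℕ × ℕ => q.1 < q.2),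
        p ∣ lam q.1 + q.2 - (lam q.2 + q.1)) ↔
      ∃ i j, i < j ∧ j < m ∧ lam i + j ≡ lam j + i [MOD p] := by
  simp only [mem_filter, mem_product, mem_range, Prod.exists]
  refine exists₂_congr fun i j => ⟨?_, ?_⟩
  · rintro ⟨⟨⟨-, hj⟩, hij⟩, hdvd⟩
    refine ⟨hij, hj, ?_⟩
    rwa [Nat.ModEq.comm, Nat.modEq_iff_dvd' (add_le_add (hlam hij.le) hij.le)]
  · rintro ⟨hij, hj, hmod⟩
    refine ⟨⟨⟨hij.trans hj, hj⟩, hij⟩, ?_⟩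
    rwa [Nat.ModEq.comm, Nat.modEq_iff_dvd' (add_le_add (hlam hij.le) hij.le)] at hmod

theorem stmt8_general (p m : ℕ) (hp : p.Prime) (hm : m ≤ p) (lam : ℕ → ℕ)
    (hanti : ∀ i j, i ≤ j → lam j ≤ lam i)
    (S : Polynomial ℤ)
    (hS : algebraMap (Polynomial ℚ) (RatFunc ℚ) (S.map (algebraMap ℤ ℚ)) =
      RatFunc.X ^ (∑ k ∈ Finset.range m, k * lam k) *
        ∏ q ∈ (Finset.range m ×ˢ Finset.range m).filter (fun q => q.1 < q.2),
          (1 - RatFunc.X ^ (lam q.1 + q.2 - (lam q.2 + q.1))) /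
            (1 - RatFunc.X ^ (q.2 - q.1))) :
    (cyclotomic p ℤ ∣ S) ↔
      ∃ i j, i < j ∧ j < m ∧ (lam i + j) ≡ (lam j + i) [MOD p] := by
  obtain ⟨ζ, hζ⟩ : ∃ ζ : ℂ, IsPrimitiveRoot ζ p :=
    ⟨_, Complex.isPrimitiveRoot_exp p hp.ne_zero⟩
  have hpair {q : ℕ × ℕ} (hq : q ∈ (range m ×ˢ range m).filter (fun q => q.1 < q.2)) :
      0 < q.2 - q.1 ∧ q.2 - q.1 < p := by
    simp only [mem_filter, mem_product, mem_range] at hq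
    omega
  have hid := congrArg (aeval ζ) (mul_prod_one_sub_X_pow_of_algebraMap_eq
    (fun q hq => (hpair hq).1.ne') hS)
  simp only [map_mul, map_prod, map_sub, map_one, map_pow, aeval_X] at hid
  have hden : ∏ q ∈ (range m ×ˢ range m).filter (fun q => q.1 < q.2), (1 - ζ ^ (q.2 - q.1)) ≠ 0 :=
    prod_ne_zero_iff.mpr fun q hq => by
      rw [Ne, hζ.one_sub_pow_eq_zero_iff]
      exact Nat.not_dvd_of_pos_of_lt (hpair hq).1 (hpair hq).2
  rw [cyclotomic_dvd_iff_aeval_eq_zero hp.pos hζ,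
    eq_zero_iff_exists_eq_zero_of_mul_eq_mul_prod hden (pow_ne_zero _ (hζ.ne_zero hp.ne_zero)) hid]
  simp only [hζ.one_sub_pow_eq_zero_iff]
  exact exists_ascending_pair_dvd_iff_exists_modEq hanti

/-- let `p ≥ m` be prime and `λ` (0-indexed `lam`) a partition with at most
`m` parts.  If `S ∈ ℤ[q]` is the principal specialization `s_λ(1,q,…,q^{m-1})`, given by
`S = q^{κ(λ)} ∏_{1≤i<j≤m} (1-q^{(λ_i-i)-(λ_j-j)})/(1-q^{j-i})` as rational functions,
then `Φ_p(q) ∣ S` in `ℤ[q]` if and only if `λ_i - i ≡ λ_j - j (mod p)` for some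
`1 ≤ i < j ≤ m`. -/
theorem stmt8 (p m : ℕ) (hp : p.Prime) (hm : m ≤ p) (lam : ℕ → ℕ)
    (hanti : ∀ i j, i ≤ j → lam j ≤ lam i) (hlen : ∀ k, m ≤ k → lam k = 0)
    (S : Polynomial ℤ)
    (hS : algebraMap (Polynomial ℚ) (RatFunc ℚ) (S.map (algebraMap ℤ ℚ)) =
      RatFunc.X ^ (∑ k ∈ Finset.range m, k * lam k) *
        ∏ q ∈ (Finset.range m ×ˢ Finset.range m).filter (fun q => q.1 < q.2),
          (1 - RatFunc.X ^ (lam q.1 + q.2 - (lam q.2 + q.1))) /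
            (1 - RatFunc.X ^ (q.2 - q.1))) :
    (cyclotomic p ℤ ∣ S) ↔
      ∃ i j, i < j ∧ j < m ∧ (lam i + j) ≡ (lam j + i) [MOD p] :=
  stmt8_general p m hp hm lam hanti S hS
end

section
/- Suppose λ and μ are partitions of the same positive integer. Then the Kostka number K_{λμ} (the number of semistandard Young tableaux of shape λ and content μ) is positive if and only if λ dominates μ in the dominance order (i.e., λ_1 + ... + λ_k ≥ μ_1 + ... + μ_k for all k). -/
/-!
Necessity: column strictness forces every entry in row `i` to be at least `i`, so the letters
`0, …, k - 1` all sit in the first `k` rows.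

Sufficiency, by induction on the number `m + 1` of letters: the cells carrying the largest
letter `m` must form a horizontal strip of size `a = μ m`. Take it as low as possible, i.e. row `i`
gives up `min λᵢ a - min λᵢ₊₁ a` cells. Telescoping shows that the remaining shape still dominates
`(μ 0, …, μ (m - 1))`, where `a ≤ μ k` for `k < m` covers the rows shorter than `a`; fill that
shape by induction and put `m` into the strip.
-/

open Finset

theorem Finset.card_filter_lt_eq_sum_card_filter_eq {ι : Type*} (s : Finset ι) (f : ι → ℕ)
    (k : ℕ) : #{a ∈ s | f a < k} = ∑ b ∈ range k, #{a ∈ s | f a = b} := by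
  rw [card_eq_sum_card_fiberwise (f := f) (t := range k) fun a ha => by
    simpa using (mem_filter.1 ha).2]
  refine sum_congr rfl fun b hb => ?_
  rw [filter_filter]
  exact congrArg card <| filter_congr fun a _ =>
    ⟨And.right, by rintro rfl; exact ⟨mem_range.1 hb, rfl⟩⟩

namespace YoungDiagram

theorem card_filter_fst_lt (D : YoungDiagram) (k : ℕ) :
    #{c ∈ D.cells | c.1 < k} = ∑ i ∈ range k, D.rowLen i := by
  rw [card_filter_lt_eq_sum_card_filter_eq]
  exact sum_congr rfl fun i _ => (D.rowLen_eq_card).symm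

theorem card_eq_sum_range_rowLen (D : YoungDiagram) {N : ℕ} (hN : D.rowLen N = 0) :
    D.card = ∑ i ∈ range N, D.rowLen i := by
  rw [← card_filter_fst_lt, filter_true_of_mem]
  rintro ⟨i, j⟩ hc
  by_contra! hi
  have := D.rowLen_anti N i hi
  have := mem_iff_lt_rowLen.1 ((mem_cells _).1 hc)
  omega

theorem rowLen_colLen_zero (D : YoungDiagram) : D.rowLen (D.colLen 0) = 0 := by
  by_contra h
  exact (lt_irrefl _) (mem_iff_lt_colLen.1 (mem_iff_lt_rowLen.2 (Nat.pos_of_ne_zero h)))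

theorem antitone_rowLen (D : YoungDiagram) : Antitone D.rowLen :=
  fun _ _ h => D.rowLen_anti _ _ h

def truncRows (D : YoungDiagram) (f : ℕ → ℕ) (hf : Antitone f) : YoungDiagram where
  cells := {c ∈ D.cells | c.2 < f c.1}
  isLowerSet := by
    rintro ⟨i₁, j₁⟩ ⟨i₂, j₂⟩ ⟨hi, hj⟩ hc
    simp only [coe_filter, Set.mem_ofPred_eq, mem_cells] at hc ⊢
    exact ⟨D.up_left_mem hi hj hc.1, hj.trans_lt (hc.2.trans_le (hf hi))⟩

variable {D : YoungDiagram} {f : ℕ → ℕ} {hf : Antitone f}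

theorem mem_truncRows {c : ℕ × ℕ} : c ∈ D.truncRows f hf ↔ c ∈ D ∧ c.2 < f c.1 :=
  mem_filter

theorem truncRows_le : D.truncRows f hf ≤ D :=
  fun _ hc => (mem_truncRows.1 hc).1

theorem rowLen_truncRows (i : ℕ) : (D.truncRows f hf).rowLen i = min (D.rowLen i) (f i) := by
  refine eq_of_forall_lt_iff fun j => ?_
  rw [← mem_iff_lt_rowLen, mem_truncRows, mem_iff_lt_rowLen, lt_min_iff]

end YoungDiagram

/-- Row `i` loses one cell for each of the first `a` columns whose bottom cell lies in row `i`. -/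
def stripRowLen (r : ℕ → ℕ) (a i : ℕ) : ℕ :=
  r i - min (r i) a + min (r (i + 1)) a

section stripRowLen

variable {r : ℕ → ℕ}

theorem stripRowLen_le (hr : Antitone r) (a : ℕ) (i : ℕ) : stripRowLen r a i ≤ r i := by
  have := hr (Nat.le_add_right i 1)
  unfold stripRowLen
  omega

theorem le_stripRowLen (hr : Antitone r) (a : ℕ) (i : ℕ) : r (i + 1) ≤ stripRowLen r a i := by
  have := hr (Nat.le_add_right i 1)
  unfold stripRowLen
  omega

theorem antitone_stripRowLen (hr : Antitone r) (a : ℕ) : Antitone (stripRowLen r a) :=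
  antitone_nat_of_succ_le fun i => (stripRowLen_le hr a (i + 1)).trans (le_stripRowLen hr a i)

theorem sum_range_stripRowLen_add (hr : Antitone r) (a : ℕ) (k : ℕ) :
    ∑ i ∈ range k, stripRowLen r a i + min (r 0) a = ∑ i ∈ range k, r i + min (r k) a := by
  induction k with
  | zero => simp
  | succ k ih =>
    have := hr (Nat.le_add_right k 1)
    rw [sum_range_succ, sum_range_succ, stripRowLen]
    omega

theorem sum_range_le_sum_range_stripRowLen (hr : Antitone r) {μ : ℕ → ℕ} (hμ : Antitone μ)
    {m : ℕ} (hdom : ∀ k ≤ m + 1, ∑ i ∈ range k, μ i ≤ ∑ i ∈ range k, r i) {k : ℕ} (hk : k ≤ m) :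
    ∑ i ∈ range k, μ i ≤ ∑ i ∈ range k, stripRowLen r (μ m) i := by
  have htel := sum_range_stripRowLen_add hr (μ m) k
  have hdom_k := hdom k (by omega)
  have hdom_succ := hdom (k + 1) (by omega)
  have hμk := hμ hk
  rw [sum_range_succ, sum_range_succ] at hdom_succ
  omega

end stripRowLen

namespace YoungDiagram

def removeStrip (D : YoungDiagram) (a : ℕ) : YoungDiagram :=
  D.truncRows (stripRowLen D.rowLen a) (antitone_stripRowLen D.antitone_rowLen a)

variable (D : YoungDiagram) (a : ℕ)

theorem removeStrip_le : D.removeStrip a ≤ D :=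
  truncRows_le

theorem rowLen_removeStrip (i : ℕ) : (D.removeStrip a).rowLen i = stripRowLen D.rowLen a i :=
  (rowLen_truncRows i).trans (min_eq_right (stripRowLen_le D.antitone_rowLen a i))

theorem rowLen_succ_le_rowLen_removeStrip (i : ℕ) :
    D.rowLen (i + 1) ≤ (D.removeStrip a).rowLen i :=
  (D.rowLen_removeStrip a i).symm ▸ le_stripRowLen D.antitone_rowLen a i

theorem card_removeStrip_add (ha : a ≤ D.rowLen 0) :
    (D.removeStrip a).card + a = D.card := by
  have hN := D.rowLen_colLen_zero
  have hN' : (D.removeStrip a).rowLen (D.colLen 0) = 0 := by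
    have := stripRowLen_le D.antitone_rowLen a (D.colLen 0)
    rw [rowLen_removeStrip]
    omega
  have htel := sum_range_stripRowLen_add D.antitone_rowLen a (D.colLen 0)
  rw [hN, min_eq_right ha, Nat.zero_min, add_zero] at htel
  rw [card_eq_sum_range_rowLen _ hN, card_eq_sum_range_rowLen _ hN', ← htel]
  simp only [rowLen_removeStrip]

end YoungDiagram

namespace SemistandardYoungTableau

def content {D : YoungDiagram} (T : SemistandardYoungTableau D) (k : ℕ) : ℕ :=
  #{c ∈ D.cells | T c.1 c.2 = k}

section

variable {D : YoungDiagram} (T : SemistandardYoungTableau D)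

theorem le_apply {i j : ℕ} (hc : (i, j) ∈ D) : i ≤ T i j := by
  induction i with
  | zero => exact Nat.zero_le _
  | succ i ih =>
    exact (ih (D.up_left_mem (Nat.le_add_right i 1) le_rfl hc)).trans_lt
      (T.col_strict (Nat.lt_add_one i) hc)

theorem sum_range_content_le (k : ℕ) :
    ∑ v ∈ range k, T.content v ≤ ∑ i ∈ range k, D.rowLen i := by
  unfold content
  rw [← card_filter_lt_eq_sum_card_filter_eq, ← D.card_filter_fst_lt]
  refine card_le_card fun c hc => ?_
  rw [mem_filter] at hc ⊢
  exact ⟨hc.1, (T.le_apply hc.1).trans_lt hc.2⟩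

theorem content_eq_zero_of_le {m : ℕ} (hT : ∀ i j, (i, j) ∈ D → T i j < m) {k : ℕ} (hk : m ≤ k) :
    T.content k = 0 :=
  card_eq_zero.2 <| filter_eq_empty_iff.2 fun c hc => (hT c.1 c.2 hc).trans_le hk |>.ne

end

variable {D' D : YoungDiagram} (T : SemistandardYoungTableau D') (hle : D' ≤ D)
  (hstrip : ∀ i, D.rowLen (i + 1) ≤ D'.rowLen i) (m : ℕ) (hT : ∀ i j, (i, j) ∈ D' → T i j < m)

def extendByStrip : SemistandardYoungTableau D where
  entry i j := if (i, j) ∈ D ∧ (i, j) ∉ D' then m else T i j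
  row_weak' := by
    intro i j₁ j₂ hj hc
    by_cases h₂ : (i, j₂) ∈ D'
    · have h₁ := D'.up_left_mem le_rfl hj.le h₂
      rw [if_neg fun h => h.2 h₁, if_neg fun h => h.2 h₂]
      exact T.row_weak hj h₂
    · rw [if_pos (show (i, j₂) ∈ D ∧ (i, j₂) ∉ D' from ⟨hc, h₂⟩)]
      split_ifs with h₁
      · exact le_rfl
      · exact (hT i j₁ (not_and_not_right.1 h₁ (D.up_left_mem le_rfl hj.le hc))).le
  col_strict' := by
    intro i₁ i₂ j hi hc
    have h₁ : (i₁, j) ∈ D' := YoungDiagram.mem_iff_lt_rowLen.2 <|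
      (YoungDiagram.mem_iff_lt_rowLen.1 hc).trans_le ((D.rowLen_anti _ _ hi).trans (hstrip i₁))
    rw [if_neg fun h => h.2 h₁]
    split_ifs with h₂
    · exact hT i₁ j h₁
    · exact T.col_strict hi (not_and_not_right.1 h₂ hc)
  zeros' := by
    intro i j hc
    rw [if_neg (fun h => hc h.1), T.zeros fun h => hc (hle h)]

variable {T hle hstrip m hT}

theorem extendByStrip_apply (i j : ℕ) : T.extendByStrip hle hstrip m hT i j =
    if (i, j) ∈ D ∧ (i, j) ∉ D' then m else T i j :=
  rfl

theorem extendByStrip_apply_le {i j : ℕ} (hc : (i, j) ∈ D) :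
    T.extendByStrip hle hstrip m hT i j ≤ m := by
  rw [extendByStrip_apply]
  split_ifs with h
  · exact le_rfl
  · exact (hT i j (not_and_not_right.1 h hc)).le

theorem content_extendByStrip_of_ne {k : ℕ} (hk : k ≠ m) :
    (T.extendByStrip hle hstrip m hT).content k = T.content k := by
  unfold content
  congr 1
  ext ⟨i, j⟩
  rw [mem_filter, mem_filter, YoungDiagram.mem_cells, YoungDiagram.mem_cells,
    extendByStrip_apply]
  split_ifs with h
  · exact iff_of_false (fun h' => hk h'.2.symm) fun h' => h.2 h'.1
  · exact and_congr_left fun _ => ⟨fun hc => not_and_not_right.1 h hc, fun h' => hle h'⟩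

theorem content_extendByStrip_self_add_card :
    (T.extendByStrip hle hstrip m hT).content m + D'.card = D.card := by
  have hstrip_cells : {c ∈ D.cells | T.extendByStrip hle hstrip m hT c.1 c.2 = m} =
      D.cells \ D'.cells := by
    ext ⟨i, j⟩
    rw [mem_filter, mem_sdiff, YoungDiagram.mem_cells, YoungDiagram.mem_cells,
      extendByStrip_apply]
    split_ifs with h
    · exact iff_of_true ⟨h.1, rfl⟩ h
    · exact iff_of_false (fun h' => (hT i j (not_and_not_right.1 h h'.1)).ne h'.2) h
  rw [content, hstrip_cells, card_sdiff_of_subset (YoungDiagram.cells_subset_iff.2 hle)]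
  exact Nat.sub_add_cancel (card_le_card (YoungDiagram.cells_subset_iff.2 hle))

end SemistandardYoungTableau

open SemistandardYoungTableau in
theorem exists_semistandardYoungTableau_of_dominates {μ : ℕ → ℕ} (hμ : Antitone μ) (m : ℕ)
    {D : YoungDiagram} (hsum : ∑ i ∈ range m, μ i = D.card)
    (hdom : ∀ k ≤ m, ∑ i ∈ range k, μ i ≤ ∑ i ∈ range k, D.rowLen i) :
    ∃ T : SemistandardYoungTableau D,
      (∀ k < m, T.content k = μ k) ∧ ∀ i j, (i, j) ∈ D → T i j < m := by
  induction m generalizing D with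
  | zero =>
    have hD : D.cells = ∅ := card_eq_zero.1 (by simpa using hsum.symm)
    exact ⟨highestWeight D, fun k hk => absurd hk k.not_lt_zero,
      fun i j hc => absurd ((YoungDiagram.mem_cells _).2 hc) (hD ▸ notMem_empty _)⟩
  | succ m ih =>
    have ha : μ m ≤ D.rowLen 0 := (hμ m.zero_le).trans (by simpa using hdom 1 (by omega))
    have hcard := D.card_removeStrip_add _ ha
    obtain ⟨T, hTcontent, hT⟩ := ih (D := D.removeStrip (μ m))
      (by rw [sum_range_succ] at hsum; omega)
      fun k hk => by
        simpa only [YoungDiagram.rowLen_removeStrip] using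
          sum_range_le_sum_range_stripRowLen D.antitone_rowLen hμ hdom hk
    refine ⟨T.extendByStrip (D.removeStrip_le _) (D.rowLen_succ_le_rowLen_removeStrip _) m hT,
      fun k hk => ?_, fun i j hc => Nat.lt_succ_of_le (extendByStrip_apply_le hc)⟩
    rcases Nat.lt_succ_iff_lt_or_eq.1 hk with hk | hk
    · rw [content_extendByStrip_of_ne hk.ne, hTcontent k hk]
    · rw [hk]
      apply Nat.add_right_cancel (m := (D.removeStrip (μ m)).card)
      rw [content_extendByStrip_self_add_card, add_comm, hcard]

theorem stmt9_general (D : YoungDiagram) (μ : ℕ → ℕ)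
    (hμanti : ∀ i j, i ≤ j → μ j ≤ μ i) (hμfin : ∀ i, D.card ≤ i → μ i = 0)
    (hsum : ∑ i ∈ Finset.range D.card, μ i = D.card) :
    (∃ T : SemistandardYoungTableau D,
        ∀ k, (D.cells.filter (fun c => T c.1 c.2 = k)).card = μ k) ↔
      ∀ k, ∑ i ∈ Finset.range k, μ i ≤ ∑ i ∈ Finset.range k, D.rowLen i := by
  constructor
  · rintro ⟨T, hT⟩ k
    exact (sum_congr rfl fun v _ => (hT v).symm).trans_le (T.sum_range_content_le k)
  · intro hdom
    obtain ⟨T, hcontent, hT⟩ := exists_semistandardYoungTableau_of_dominates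
      (fun i j h => hμanti i j h) D.card hsum fun k _ => hdom k
    refine ⟨T, fun k => ?_⟩
    rcases lt_or_ge k D.card with hk | hk
    · exact hcontent k hk
    · rw [hμfin k hk]
      exact T.content_eq_zero_of_le hT hk

/-- Kostka positivity: for partitions `λ` (given as a Young diagram `D`) and
`μ` of the same positive integer, there exists a semistandard Young tableau of shape `λ` and
content `μ` (with letters `0, 1, 2, …`, letter `k` occurring `μ k` times) if and only if
`λ` dominates `μ`. -/
theorem stmt9 (D : YoungDiagram) (μ : ℕ → ℕ)
    (hμanti : ∀ i j, i ≤ j → μ j ≤ μ i) (hμfin : ∀ i, D.card ≤ i → μ i = 0)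
    (hsum : ∑ i ∈ Finset.range D.card, μ i = D.card) (hpos : 0 < D.card) :
    (∃ T : SemistandardYoungTableau D,
        ∀ k, (D.cells.filter (fun c => T c.1 c.2 = k)).card = μ k) ↔
      ∀ k, ∑ i ∈ Finset.range k, μ i ≤ ∑ i ∈ Finset.range k, D.rowLen i :=
  stmt9_general D μ hμanti hμfin hsum
end
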